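/- arXiv:2001.06358 — 3 statements merged into one kernel-verified Lean document; each statement's English description precedes it below -/
import Mathlib

section
/- Let F be a standard Borel space and let μ be a measure on F such that μ(F) < ∞, μ(A) is a natural number for every measurable A ⊆ F, and μ({x}) ≤ 1 for every x ∈ F. Then there is a unique finite set S ⊆ F (an element of Finset F) such that μ = ∑_{x∈S} δ_x, i.e. μ = ι(S). -/
/-!
A nonzero ℕ-valued finite measure on a countably separated space has an atom of mass at least `1`:
refine `univ` along a separating sequence `s n`, each time keeping whichever of the two pieces
has mass at least `1` (one of them does, since two masses `< 1` are both `0`); the pieces shrink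
to a single point, which by continuity from above keeps mass at least `1`. Hence the points of
mass `≥ 1` form a finite set `S`, the restriction of `μ` to the complement of `S` has no such
atom and therefore vanishes, and each point of `S` has mass exactly `1`.
-/

open MeasureTheory

/-- The canonical embedding of a database instance (a finite set of facts)
into the space of measures: `S ↦ ∑_{x ∈ S} δ_x`. -/
noncomputable def iota {F : Type*} [MeasurableSpace F] (S : Finset F) : Measure F :=
  ∑ x ∈ S, Measure.dirac x

open Set

section Iota

variable {F : Type*} [MeasurableSpace F] [MeasurableSingletonClass F]

theorem iota_apply_singleton [DecidableEq F] (S : Finset F) (x : F) :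
    iota S {x} = if x ∈ S then 1 else 0 := by
  simp [iota]

theorem iota_injective : Function.Injective (iota (F := F)) := fun S T h ↦ by
  classical
  ext x
  have hx := congr_arg (· {x}) h
  simp only [iota_apply_singleton] at hx
  split_ifs at hx <;> simp_all

end Iota

namespace MeasureTheory.Measure

variable {α : Type*} [MeasurableSpace α]

section MeasurableSingletonClass

variable [MeasurableSingletonClass α]

theorem restrict_finset_eq_sum_smul_dirac (μ : Measure α) (S : Finset α) :
    μ.restrict S = ∑ x ∈ S, μ {x} • dirac x := by
  classical
  induction S using Finset.induction_on with
  | empty => simp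
  | insert a S ha ih =>
    rw [Finset.coe_insert, insert_eq, restrict_union (by simpa using ha) S.measurableSet,
      restrict_singleton, ih, Finset.sum_insert ha]

theorem finite_setOf_one_le_measure_singleton (μ : Measure α) [IsFiniteMeasure μ] :
    {x | 1 ≤ μ {x}}.Finite := by
  by_contra hinf
  exact measure_ne_top μ _ (Set.Infinite.meas_eq_top hinf ⟨1, one_ne_zero, fun _ hx ↦ hx⟩)

end MeasurableSingletonClass

def IsNatValued (μ : Measure α) : Prop :=
  ∀ A : Set α, MeasurableSet A → ∃ n : ℕ, μ A = n

section HeavyCell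

open Classical in
noncomputable def heavyCell (μ : Measure α) (s : ℕ → Set α) : ℕ → Set α
  | 0 => univ
  | n + 1 =>
    if 1 ≤ μ (heavyCell μ s n ∩ s n) then heavyCell μ s n ∩ s n else heavyCell μ s n \ s n

variable (μ : Measure α) (s : ℕ → Set α)

theorem heavyCell_antitone : Antitone (μ.heavyCell s) := by
  refine antitone_nat_of_succ_le fun n ↦ ?_
  rw [heavyCell]
  split_ifs
  exacts [inter_subset_left, sdiff_subset]

theorem heavyCell_succ_subset_or_subset_compl (n : ℕ) :
    μ.heavyCell s (n + 1) ⊆ s n ∨ μ.heavyCell s (n + 1) ⊆ (s n)ᶜ := by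
  rw [heavyCell]
  split_ifs
  exacts [.inl inter_subset_right, .inr fun _ hx ↦ hx.2]

theorem measurableSet_heavyCell (hs : ∀ n, MeasurableSet (s n)) (n : ℕ) :
    MeasurableSet (μ.heavyCell s n) := by
  induction n with
  | zero => exact .univ
  | succ n ih =>
    rw [heavyCell]
    split_ifs
    exacts [ih.inter (hs n), ih.diff (hs n)]

end HeavyCell

namespace IsNatValued

variable {μ : Measure α}

theorem one_le_of_ne_zero (hμ : μ.IsNatValued) {A : Set α} (hA : MeasurableSet A)
    (h : μ A ≠ 0) : 1 ≤ μ A := by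
  obtain ⟨n, hn⟩ := hμ A hA
  rw [hn] at h ⊢
  exact_mod_cast Nat.one_le_iff_ne_zero.mpr (by exact_mod_cast h)

theorem isFiniteMeasure (hμ : μ.IsNatValued) : IsFiniteMeasure μ := by
  obtain ⟨n, hn⟩ := hμ univ MeasurableSet.univ
  exact ⟨hn ▸ ENNReal.natCast_lt_top n⟩

theorem restrict (hμ : μ.IsNatValued) {s : Set α} (hs : MeasurableSet s) :
    (μ.restrict s).IsNatValued := fun A hA ↦ by
  rw [restrict_apply hA]
  exact hμ _ (hA.inter hs)

theorem one_le_inter_or_one_le_diff (hμ : μ.IsNatValued) {A B : Set α}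
    (hA : MeasurableSet A) (hB : MeasurableSet B) (h : 1 ≤ μ A) :
    1 ≤ μ (A ∩ B) ∨ 1 ≤ μ (A \ B) := by
  by_contra! hlt
  have hinter : μ (A ∩ B) = 0 := by
    by_contra h0
    exact (hμ.one_le_of_ne_zero (hA.inter hB) h0).not_gt hlt.1
  have hdiff : μ (A \ B) = 0 := by
    by_contra h0
    exact (hμ.one_le_of_ne_zero (hA.diff hB) h0).not_gt hlt.2
  rw [← measure_inter_add_sdiff A hB, hinter, hdiff] at h
  simp at h

theorem one_le_measure_heavyCell (hμ : μ.IsNatValued) {s : ℕ → Set α}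
    (hs : ∀ n, MeasurableSet (s n)) (h : 1 ≤ μ univ) (n : ℕ) : 1 ≤ μ (μ.heavyCell s n) := by
  induction n with
  | zero => exact h
  | succ n ih =>
    rw [heavyCell]
    split_ifs with hinter
    · exact hinter
    · exact (hμ.one_le_inter_or_one_le_diff (measurableSet_heavyCell μ s hs n) (hs n)
        ih).resolve_left hinter

variable [MeasurableSpace.CountablySeparated α]

theorem exists_one_le_measure_singleton (hμ : μ.IsNatValued) (h : μ ≠ 0) :
    ∃ x, 1 ≤ μ {x} := by
  have := hμ.isFiniteMeasure
  obtain ⟨s, hs, hsep⟩ := exists_seq_separating α MeasurableSet.empty univ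
  have hcells : 1 ≤ μ (⋂ n, μ.heavyCell s n) := by
    rw [(heavyCell_antitone μ s).measure_iInter
      (fun n ↦ (measurableSet_heavyCell μ s hs n).nullMeasurableSet) ⟨0, measure_ne_top _ _⟩]
    exact le_iInf (hμ.one_le_measure_heavyCell hs
      (hμ.one_le_of_ne_zero .univ (measure_univ_ne_zero.mpr h)))
  obtain ⟨x, hx⟩ := nonempty_of_measure_ne_zero (one_pos.trans_le hcells).ne'
  refine ⟨x, hcells.trans (measure_mono fun y hy ↦ hsep y trivial x trivial fun n ↦ ?_)⟩
  have hyn := mem_iInter.mp hy (n + 1)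
  have hxn := mem_iInter.mp hx (n + 1)
  rcases heavyCell_succ_subset_or_subset_compl μ s n with hsub | hsub
  · exact iff_of_true (hsub hyn) (hsub hxn)
  · exact iff_of_false (hsub hyn) (hsub hxn)

theorem exists_eq_iota (hμ : μ.IsNatValued) (hpt : ∀ x, μ {x} ≤ 1) :
    ∃ S : Finset α, μ = iota S := by
  have := hμ.isFiniteMeasure
  have := MeasurableSpace.measurableSingletonClass_of_countablySeparated (α := α)
  set S := (finite_setOf_one_le_measure_singleton μ).toFinset
  have hS : ∀ x, x ∈ S ↔ 1 ≤ μ {x} := fun x ↦ by simp [S]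
  have hcompl : μ.restrict (↑S)ᶜ = 0 := by
    by_contra h
    obtain ⟨x, hx⟩ := (hμ.restrict S.measurableSet.compl).exists_one_le_measure_singleton h
    rw [restrict_apply (measurableSet_singleton x)] at hx
    by_cases hxS : x ∈ S
    · simp [hxS] at hx
    · exact hxS ((hS x).2 (hx.trans (measure_mono inter_subset_left)))
  refine ⟨S, ?_⟩
  rw [← restrict_add_restrict_compl (μ := μ) S.measurableSet, hcompl, add_zero,
    restrict_finset_eq_sum_smul_dirac, iota]
  refine Finset.sum_congr rfl fun x hx ↦ ?_
  rw [le_antisymm (hpt x) ((hS x).1 hx), one_smul]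

end IsNatValued

end MeasureTheory.Measure

theorem exists_unique_finset_of_natValued_measure_general (F : Type*) [MeasurableSpace F]
    [StandardBorelSpace F] (μ : Measure F)
    (hnat : ∀ A : Set F, MeasurableSet A → ∃ n : ℕ, μ A = n)
    (hpt : ∀ x : F, μ {x} ≤ 1) :
    ∃! S : Finset F, μ = iota S := by
  obtain ⟨S, hS⟩ := Measure.IsNatValued.exists_eq_iota hnat hpt
  exact ⟨S, hS, fun T hT ↦ iota_injective (hT.symm.trans hS)⟩

/-- A finite measure on a standard Borel space `F` which takes only natural-number
values on measurable sets and whose point masses are at most `1` is `ι S` for a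
unique finite set `S ⊆ F`. -/
theorem exists_unique_finset_of_natValued_measure (F : Type*) [MeasurableSpace F]
    [StandardBorelSpace F] (μ : Measure F)
    (hfin : μ Set.univ < ⊤)
    (hnat : ∀ A : Set F, MeasurableSet A → ∃ n : ℕ, μ A = n)
    (hpt : ∀ x : F, μ {x} ≤ 1) :
    ∃! S : Finset F, μ = iota S :=
  exists_unique_finset_of_natValued_measure_general F μ hnat hpt
end

section
/- Let F be a standard Borel space. The map ι : Finset F → Measure F is injective, and it maps every measurable subset of the instance space 𝔻 to a measurable subset of Measure F (with respect to the canonical σ-algebra on Measure F); in particular, the range of ι is a measurable subset of Measure F. Hence ι is a measurable embedding of 𝔻 into Measure F. -/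
open MeasureTheory

/-- The instance space `𝔻`: `Finset F` equipped with the σ-algebra comapped along `ι`
from the canonical σ-algebra on `Measure F`. -/
noncomputable instance instanceSpace (F : Type*) [MeasurableSpace F] : MeasurableSpace (Finset F) :=
  MeasurableSpace.comap iota inferInstance

/-!
Fix a Borel embedding `e : F → ℝ`. A finite measure `μ` on `F` is determined by the countably
many values `μ (e ⁻¹' Iic q)`, `q : ℚ`, since these sets form a generating π-system; this gives
an injective measurable map from finite measures into the countably separated space
`ℚ → ℝ≥0∞`, where the Lusin–Souslin theorem applies. The measures `∑ i, δ_{x i}` with `e ∘ x`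
strictly increasing enumerate `range ι` without repetition, so the image of `range ι` in
`ℚ → ℝ≥0∞` is a countable union of injective images of Borel sets, hence Borel, and `range ι`
is its preimage intersected with the finite measures. As `𝔻` carries the comap σ-algebra, an
injective `ι` with measurable range is a measurable embedding.
-/

open Set
open scoped ENNReal

lemma Finset.exists_strictMono_comp_map_univ_eq {α β : Type*} [LinearOrder β] {e : α → β}
    (he : Function.Injective e) (S : Finset α) :
    ∃ (n : ℕ) (x : Fin n ↪ α), StrictMono (e ∘ x) ∧ Finset.univ.map x = S := by
  let _ : LinearOrder α := LinearOrder.lift' e he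
  exact ⟨_, (S.orderEmbOfFin rfl).toEmbedding, (S.orderEmbOfFin rfl).strictMono,
    S.map_orderEmbOfFin_univ rfl⟩

section

variable {F : Type*} [MeasurableSpace F]

instance isFiniteMeasure_iota (S : Finset F) : IsFiniteMeasure (iota S) := by
  unfold iota; infer_instance

lemma iota_apply_singleton_s2 [MeasurableSingletonClass F] (S : Finset F) (x : F) :
    iota S {x} = (S : Set F).indicator 1 x := by
  classical
  simp [iota, Measure.finsetSum_apply, indicator_apply]

lemma iota_injective_s2 [MeasurableSingletonClass F] :
    Function.Injective (iota : Finset F → Measure F) := fun S T h =>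
  Finset.coe_injective <| indicator_one_inj (M₀ := ℝ≥0∞) <| funext fun x => by
    rw [← iota_apply_singleton_s2, ← iota_apply_singleton_s2, h]

lemma iota_map_univ {n : ℕ} (x : Fin n → F) (hx : Function.Injective x) :
    iota (Finset.univ.map ⟨x, hx⟩) = ∑ i, Measure.dirac (x i) :=
  Finset.sum_map _ _ _

lemma measurable_sum_dirac (n : ℕ) :
    Measurable fun x : Fin n → F => ∑ i, Measure.dirac (x i) := by
  refine Measure.measurable_of_measurable_coe _ fun s hs => ?_
  simp only [Measure.finsetSum_apply]
  exact Finset.measurable_sum _ fun i _ =>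
    (Measure.measurable_coe hs).comp (Measure.measurable_dirac.comp (measurable_pi_apply i))

def cdfAlong (e : F → ℝ) (μ : Measure F) (q : ℚ) : ℝ≥0∞ :=
  μ (e ⁻¹' Iic (q : ℝ))

lemma measurable_cdfAlong {e : F → ℝ} (he : Measurable e) : Measurable (cdfAlong e) :=
  measurable_pi_lambda _ fun _ => Measure.measurable_coe (he measurableSet_Iic)

lemma cdfAlong_injOn {e : F → ℝ} (he : MeasurableEmbedding e) :
    InjOn (cdfAlong e) {μ | μ univ ≠ ∞} := by
  intro μ hμ ν _ hμν
  have hgen : ‹MeasurableSpace F› =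
      MeasurableSpace.generateFrom (preimage e '' ⋃ q : ℚ, {Iic (q : ℝ)}) := by
    rw [← MeasurableSpace.comap_generateFrom, ← Real.borel_eq_generateFrom_Iic_rat,
      ← BorelSpace.measurable_eq, he.comap_eq]
  refine Measure.ext_of_generateFrom_of_iUnion _ (fun i : ℕ => e ⁻¹' Iic (i : ℝ)) hgen
    (Real.isPiSystem_Iic_rat.comap e) ?_ (fun i => ⟨_, mem_iUnion.2 ⟨i, rfl⟩, by simp⟩)
    (fun i => ne_top_of_le_ne_top hμ (measure_mono (subset_univ _))) ?_
  · exact eq_univ_of_forall fun a => mem_iUnion.2 ⟨_, Nat.le_ceil (e a)⟩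
  · rintro _ ⟨t, ht, rfl⟩
    obtain ⟨q, rfl⟩ : ∃ q : ℚ, Iic (q : ℝ) = t := by simpa using ht
    exact congrFun hμν q

lemma measurableSet_setOf_strictMono_comp {n : ℕ} {e : F → ℝ} (he : Measurable e) :
    MeasurableSet {x : Fin n → F | StrictMono (e ∘ x)} := by
  simp only [StrictMono, ofPred_forall]
  exact .iInter fun i => .iInter fun j => .iInter fun _ =>
    measurableSet_lt (he.comp (measurable_pi_apply i)) (he.comp (measurable_pi_apply j))

lemma range_iota_eq_iUnion_image {e : F → ℝ} (he : Function.Injective e) :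
    range (iota : Finset F → Measure F) =
      ⋃ n, (fun x : Fin n → F => ∑ i, Measure.dirac (x i)) '' {x | StrictMono (e ∘ x)} := by
  ext μ
  simp only [mem_range, mem_iUnion, mem_image, mem_ofPred_eq]
  constructor
  · rintro ⟨S, rfl⟩
    obtain ⟨n, x, hx, rfl⟩ := S.exists_strictMono_comp_map_univ_eq he
    exact ⟨n, x, hx, (iota_map_univ x x.injective).symm⟩
  · rintro ⟨n, x, hx, rfl⟩
    exact ⟨_, iota_map_univ x hx.injective.of_comp⟩

lemma injOn_cdfAlong_sum_dirac [MeasurableSingletonClass F] {e : F → ℝ}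
    (he : MeasurableEmbedding e) (n : ℕ) :
    InjOn (fun x : Fin n → F => cdfAlong e (∑ i, Measure.dirac (x i)))
      {x | StrictMono (e ∘ x)} := by
  intro x hx y hy hxy
  have hsum := cdfAlong_injOn he (measure_ne_top _ _) (measure_ne_top _ _) hxy
  rw [← iota_map_univ x hx.injective.of_comp, ← iota_map_univ y hy.injective.of_comp] at hsum
  have hrange : range (e ∘ x) = range (e ∘ y) := by
    have := congrArg (fun S : Finset F => e '' S) (iota_injective_s2 hsum)
    simpa [range_comp] using this
  exact he.injective.comp_left ((StrictMono.range_inj hx hy).1 hrange)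

lemma measurableSet_range_iota [StandardBorelSpace F] :
    MeasurableSet (range (iota : Finset F → Measure F)) := by
  obtain ⟨e, he⟩ := exists_measurableEmbedding_real F
  have hfinite : range iota ⊆ {μ : Measure F | μ univ ≠ ∞} := by
    rintro _ ⟨S, rfl⟩
    exact measure_ne_top _ _
  have himage : MeasurableSet (cdfAlong e '' range iota) := by
    rw [range_iota_eq_iUnion_image he.injective, image_iUnion]
    refine .iUnion fun n => ?_
    rw [← image_comp]
    exact (measurableSet_setOf_strictMono_comp he.measurable).image_of_measurable_injOn
      ((measurable_cdfAlong he.measurable).comp (measurable_sum_dirac n))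
      (injOn_cdfAlong_sum_dirac he n)
  rw [← (cdfAlong_injOn he).preimage_image_inter hfinite]
  exact (measurable_cdfAlong he.measurable himage).inter
    (Measure.measurable_coe .univ (measurableSet_singleton ∞).compl)

end

/-- `ι` is injective, maps measurable subsets of the instance space `𝔻` to measurable
subsets of `Measure F`, has measurable range, and hence is a measurable embedding of
`𝔻` into `Measure F`. -/
theorem iota_measurableEmbedding (F : Type*) [MeasurableSpace F] [StandardBorelSpace F] :
    Function.Injective (iota : Finset F → Measure F) ∧
    (∀ s : Set (Finset F), MeasurableSet s → MeasurableSet (iota '' s)) ∧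
    MeasurableSet (Set.range (iota : Finset F → Measure F)) ∧
    MeasurableEmbedding (iota : Finset F → Measure F) := by
  have hemb : MeasurableEmbedding (iota : Finset F → Measure F) :=
    MeasurableEmbedding.iff_comap_eq.2 ⟨iota_injective_s2, rfl, measurableSet_range_iota⟩
  exact ⟨hemb.injective, fun _ => hemb.measurableSet_image.2, hemb.measurableSet_range, hemb⟩
end

section
/- Let F be a standard Borel space. Then the sequential extension function ext : 𝔻 × F → 𝔻 defined by ext(S, x) = insert x S (i.e. S ∪ {x}) is measurable, where 𝔻 × F carries the product of the instance-space σ-algebra and the Borel σ-algebra of F. -/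
open MeasureTheory

/-!
A map into `𝔻` is measurable iff its composite with `ι` is, and `ι (insert x S)` is `ι S` or
`δ_x + ι S` according to whether `x ∈ S`. So everything reduces to measurability of
`{(S, x) | x ∈ S}`, the level set `ι S {x} = 1`. Now `ι S {x}` is the `ι S`-measure of the
section at `(S, x)` of the measurable set `{((S, x), y) | x = y}`, which depends measurably on
`(S, x)` because `S ↦ ι S` is an s-finite kernel: on `{S | #S = n}` it is bounded by `n`.
-/

open ProbabilityTheory
open scoped ENNReal

section

variable {F : Type*} [MeasurableSpace F]

lemma measurable_iota : Measurable (iota : Finset F → Measure F) :=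
  comap_measurable iota

lemma measurable_iff_measurable_iota_comp {α : Type*} [MeasurableSpace α] {g : α → Finset F} :
    Measurable g ↔ Measurable (iota ∘ g) :=
  measurable_comap_iff

lemma iota_apply (S : Finset F) (A : Set F) : iota S A = ∑ y ∈ S, Measure.dirac y A :=
  Measure.finsetSum_apply S _ A

lemma iota_univ (S : Finset F) : iota S Set.univ = S.card := by
  simp [iota_apply]

lemma iota_singleton [MeasurableSingletonClass F] [DecidableEq F] (S : Finset F) (x : F) :
    iota S {x} = if x ∈ S then 1 else 0 := by
  simp_rw [iota_apply, Measure.dirac_apply, Set.indicator_apply, Set.mem_singleton_iff,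
    Pi.one_apply, Finset.sum_ite_eq']

lemma iota_insert [DecidableEq F] (S : Finset F) (x : F) :
    iota (insert x S) = if x ∈ S then iota S else Measure.dirac x + iota S := by
  split_ifs with hx
  · rw [Finset.insert_eq_of_mem hx]
  · exact Finset.sum_insert hx

lemma measurableSet_card_eq (n : ℕ) : MeasurableSet {S : Finset F | S.card = n} := by
  have : {S : Finset F | S.card = n} = (fun S => iota S Set.univ) ⁻¹' {(n : ℝ≥0∞)} := by
    ext S
    simp [iota_univ]
  rw [this]
  exact (Measure.measurable_coe MeasurableSet.univ).comp measurable_iota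
    (measurableSet_singleton _)

variable (F) in
noncomputable def iotaKernel : Kernel (Finset F) F :=
  ⟨iota, measurable_iota⟩

noncomputable def iotaKernelCardEq (n : ℕ) : Kernel (Finset F) F :=
  Kernel.piecewise (measurableSet_card_eq n) (iotaKernel F) 0

instance (n : ℕ) : IsFiniteKernel (iotaKernelCardEq (F := F) n) := by
  refine ⟨⟨n, ENNReal.natCast_lt_top n, fun S => ?_⟩⟩
  rw [iotaKernelCardEq, Kernel.piecewise_apply]
  split_ifs with h
  · exact (iota_univ S).trans_le (by rw [h])
  · simp

lemma iotaKernel_eq_sum : iotaKernel F = Kernel.sum iotaKernelCardEq := by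
  ext S A hA
  rw [Kernel.sum_apply' _ _ hA, tsum_eq_single S.card]
  · simp [iotaKernelCardEq, Kernel.piecewise_apply]
  · intro n hn
    simp [iotaKernelCardEq, Kernel.piecewise_apply, Ne.symm hn]

instance : IsSFiniteKernel (iotaKernel F) :=
  ⟨⟨_, inferInstance, iotaKernel_eq_sum⟩⟩

lemma measurable_iota_apply_singleton [MeasurableEq F] :
    Measurable fun p : Finset F × F => iota p.1 {p.2} := by
  have hdiag : MeasurableSet {q : (Finset F × F) × F | q.1.2 = q.2} :=
    measurableSet_eq_fun measurable_fst.snd measurable_snd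
  convert Kernel.measurable_kernel_prodMk_left (κ := Kernel.prodMkRight F (iotaKernel F)) hdiag
    using 2 with p
  have : Prod.mk p ⁻¹' {q : (Finset F × F) × F | q.1.2 = q.2} = {p.2} := by
    ext y
    simp [eq_comm]
  rw [this]
  rfl

lemma measurableSet_setOf_snd_mem_fst [MeasurableEq F] :
    MeasurableSet {p : Finset F × F | p.2 ∈ p.1} := by
  classical
  have : {p : Finset F × F | p.2 ∈ p.1} = (fun p => iota p.1 {p.2}) ⁻¹' {1} := by
    ext p
    simp [iota_singleton]
  rw [this]
  exact measurable_iota_apply_singleton (measurableSet_singleton _)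

end

/-- The sequential extension function `ext (S, x) = S ∪ {x} = insert x S` is measurable
with respect to the product of the instance-space σ-algebra and the Borel σ-algebra of
the standard Borel space `F`. -/
theorem measurable_ext (F : Type*) [MeasurableSpace F] [StandardBorelSpace F]
    [DecidableEq F] :
    Measurable (fun p : Finset F × F => insert p.2 p.1) := by
  rw [measurable_iff_measurable_iota_comp, Function.comp_def]
  simp_rw [iota_insert]
  exact Measurable.ite measurableSet_setOf_snd_mem_fst (measurable_iota.comp measurable_fst)
    ((Measure.measurable_dirac.comp measurable_snd).add (measurable_iota.comp measurable_fst))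
end
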